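/- arXiv:2509.16157 — 5 statements merged into one kernel-verified Lean document; each statement's English description precedes it below -/
import Mathlib

section
/- Threshold condition for price impact, Case 1 (price decreases): Let (L, a, b) be a liquidity position with L > 0 and 0 < a < b, let p_x, p_y > 0 be the market prices of tokens X and Y, and let q, q' > 0 be pool prices with q' < q. Write q̂ = min(b, max(a, q)) and q̂' = min(b, max(a, q')), and assume q̂' < q̂. Then the absolute price impact C = p_x·(x(q) − x(q')) + p_y·(y(q) − y(q')) satisfies C ≤ 0 if and only if (1/q̂)·(p_x/p_y)² ≥ q̂'. -/
/-- Token-X amount held by a CLMM position `(L, a, b)` at pool price `q`. -/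
noncomputable def clmmX (L a b q : ℝ) : ℝ :=
  L * (1 / Real.sqrt (min b (max a q)) - 1 / Real.sqrt b)

/-- Token-Y amount held by a CLMM position `(L, a, b)` at pool price `q`. -/
noncomputable def clmmY (L a b q : ℝ) : ℝ :=
  L * (Real.sqrt (min b (max a q)) - Real.sqrt a)

/-!
Writing `u = √q̂` and `v = √q̂'`, the terms `1/√b` and `√a` cancel in the differences, and
`C = L (u - v) (p_y - p_x / (u v))`. Since `L (u - v) > 0`, `C ≤ 0` iff `p_y u v ≤ p_x`, which after
squaring (both sides are nonnegative) is the threshold `q̂' ≤ (1/q̂) (p_x/p_y)²`.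
-/

open Real

theorem clmmX_sub_clmmX (L a b q q' : ℝ) :
    clmmX L a b q - clmmX L a b q' =
      L * (1 / √(min b (max a q)) - 1 / √(min b (max a q'))) := by
  unfold clmmX; ring

theorem clmmY_sub_clmmY (L a b q q' : ℝ) :
    clmmY L a b q - clmmY L a b q' = L * (√(min b (max a q)) - √(min b (max a q'))) := by
  unfold clmmY; ring

theorem min_max_pos {a b : ℝ} (q : ℝ) (ha : 0 < a) (hab : a ≤ b) : 0 < min b (max a q) :=
  ha.trans_le (le_min hab (le_max_left a q))

theorem price_impact_eq_mul {L px py u v : ℝ} (hu : u ≠ 0) (hv : v ≠ 0) :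
    px * (L * (1 / u - 1 / v)) + py * (L * (u - v)) = L * (u - v) * (py - px / (u * v)) := by
  field_simp; ring

theorem mul_le_iff_sq_le {px py u v : ℝ} (hu : 0 < u) (hv : 0 < v) (hpx : 0 ≤ px)
    (hpy : 0 < py) : py * (u * v) ≤ px ↔ v ^ 2 ≤ 1 / u ^ 2 * (px / py) ^ 2 := by
  have hsq : 1 / u ^ 2 * (px / py) ^ 2 = px ^ 2 / (py * u) ^ 2 := by field_simp
  rw [hsq, le_div_iff₀ (by positivity), ← mul_pow, ← pow_le_pow_iff_left₀ (by positivity) hpx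
    two_ne_zero]
  ring_nf

theorem price_impact_nonpos_iff {L px py u v : ℝ} (hL : 0 < L) (hv : 0 < v) (hvu : v < u)
    (hpx : 0 ≤ px) (hpy : 0 < py) :
    px * (L * (1 / u - 1 / v)) + py * (L * (u - v)) ≤ 0 ↔ v ^ 2 ≤ 1 / u ^ 2 * (px / py) ^ 2 := by
  have hu : 0 < u := hv.trans hvu
  rw [price_impact_eq_mul hu.ne' hv.ne', ← mul_zero (L * (u - v)),
    mul_le_mul_iff_right₀ (mul_pos hL (sub_pos.mpr hvu)), sub_nonpos,
    le_div_iff₀ (mul_pos hu hv), mul_le_iff_sq_le hu hv hpx hpy]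

theorem threshold_condition_price_decrease_general
    (L a b px py q q' : ℝ)
    (hL : 0 < L) (ha : 0 < a) (hab : a < b)
    (hpx : 0 < px) (hpy : 0 < py)
    (hproj : min b (max a q') < min b (max a q)) :
    px * (clmmX L a b q - clmmX L a b q') + py * (clmmY L a b q - clmmY L a b q') ≤ 0 ↔
      (1 / min b (max a q)) * (px / py) ^ 2 ≥ min b (max a q') := by
  have hA := min_max_pos q ha hab.le
  have hB := min_max_pos q' ha hab.le
  rw [clmmX_sub_clmmX, clmmY_sub_clmmY, price_impact_nonpos_iff hL (sqrt_pos.mpr hB)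
    (sqrt_lt_sqrt hB.le hproj) hpx.le hpy, sq_sqrt hA.le, sq_sqrt hB.le, ge_iff_le]

/-- Threshold condition for price impact, Case 1 (price decreases). -/
theorem threshold_condition_price_decrease
    (L a b px py q q' : ℝ)
    (hL : 0 < L) (ha : 0 < a) (hab : a < b)
    (hpx : 0 < px) (hpy : 0 < py)
    (hq : 0 < q) (hq' : 0 < q') (hlt : q' < q)
    (hproj : min b (max a q') < min b (max a q)) :
    px * (clmmX L a b q - clmmX L a b q') + py * (clmmY L a b q - clmmY L a b q') ≤ 0 ↔
      (1 / min b (max a q)) * (px / py) ^ 2 ≥ min b (max a q') :=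
  threshold_condition_price_decrease_general L a b px py q q' hL ha hab hpx hpy hproj
end

section
/- Threshold condition for price impact, Case 2 (price increases): Let (L, a, b) be a liquidity position with L > 0 and 0 < a < b, let p_x, p_y > 0 be the market prices of tokens X and Y, and let q, q' > 0 be pool prices with q < q'. Write q̂ = min(b, max(a, q)) and q̂' = min(b, max(a, q')), and assume q̂ < q̂'. Then the absolute price impact C = p_x·(x(q) − x(q')) + p_y·(y(q) − y(q')) satisfies C ≤ 0 if and only if (1/q̂)·(p_x/p_y)² ≤ q̂'. -/
/-- Threshold condition for price impact, Case 2 (price increases). -/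
theorem threshold_condition_price_increase
    (L a b px py q q' : ℝ)
    (hL : 0 < L) (ha : 0 < a) (hab : a < b)
    (hpx : 0 < px) (hpy : 0 < py)
    (hq : 0 < q) (hq' : 0 < q') (hlt : q < q')
    (hproj : min b (max a q) < min b (max a q')) :
    px * (clmmX L a b q - clmmX L a b q') + py * (clmmY L a b q - clmmY L a b q') ≤ 0 ↔
      (1 / min b (max a q)) * (px / py) ^ 2 ≤ min b (max a q') := by
  set u := min b (max a q) with hu_def
  set v := min b (max a q') with hv_def
  have hu0 : 0 < u := lt_of_lt_of_le ha (le_min hab.le (le_max_left _ _))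
  have hv0 : 0 < v := lt_of_lt_of_le ha (le_min hab.le (le_max_left _ _))
  have hsu : 0 < Real.sqrt u := Real.sqrt_pos.mpr hu0
  have hsv : 0 < Real.sqrt v := Real.sqrt_pos.mpr hv0
  have hsb : 0 < Real.sqrt b := Real.sqrt_pos.mpr (ha.trans hab)
  have hss : Real.sqrt u < Real.sqrt v := Real.sqrt_lt_sqrt hu0.le hproj
  have hsu2 : Real.sqrt u ^ 2 = u := Real.sq_sqrt hu0.le
  have hsv2 : Real.sqrt v ^ 2 = v := Real.sq_sqrt hv0.le
  have hC : px * (clmmX L a b q - clmmX L a b q') + py * (clmmY L a b q - clmmY L a b q')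
      = (L * (Real.sqrt v - Real.sqrt u) / (Real.sqrt u * Real.sqrt v))
        * (px - py * (Real.sqrt u * Real.sqrt v)) := by
    simp only [clmmX, clmmY, ← hu_def, ← hv_def]
    field_simp
    ring
  have hk : 0 < L * (Real.sqrt v - Real.sqrt u) / (Real.sqrt u * Real.sqrt v) :=
    div_pos (mul_pos hL (sub_pos.mpr hss)) (mul_pos hsu hsv)
  have hsq : (py * (Real.sqrt u * Real.sqrt v)) ^ 2 = u * v * py ^ 2 := by
    rw [mul_pow, mul_pow, hsu2, hsv2]; ring
  rw [hC]
  constructor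
  · intro h
    have h1 : px - py * (Real.sqrt u * Real.sqrt v) ≤ 0 := by
      by_contra h2
      push_neg at h2
      nlinarith
    have h3 : px ^ 2 ≤ (py * (Real.sqrt u * Real.sqrt v)) ^ 2 := by
      have : px ≤ py * (Real.sqrt u * Real.sqrt v) := by linarith
      nlinarith
    rw [one_div, inv_mul_le_iff₀ hu0, div_pow]
    rw [div_le_iff₀ (by positivity : (0:ℝ) < py ^ 2)]
    linarith [hsq ▸ h3]
  · intro h
    rw [one_div, inv_mul_le_iff₀ hu0, div_pow, div_le_iff₀ (by positivity : (0:ℝ) < py ^ 2)] at h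
    have h3 : px ^ 2 ≤ (py * (Real.sqrt u * Real.sqrt v)) ^ 2 := by rw [hsq]; linarith
    have h4 : px ≤ py * (Real.sqrt u * Real.sqrt v) := by
      have hpos : 0 < py * (Real.sqrt u * Real.sqrt v) := by positivity
      nlinarith
    have : px - py * (Real.sqrt u * Real.sqrt v) ≤ 0 := by linarith
    exact mul_nonpos_of_nonneg_of_nonpos hk.le this
end

section
/- Gain under diverging prices: Let (L, a, b) be a liquidity position with L > 0 and 0 < a < b, let p_x, p_y > 0 be market prices, and let q, q' > 0 be pool prices. If either q' < q ≤ p_x/p_y or q' > q ≥ p_x/p_y (i.e., the trade moves the pool price away from the external market price p_x/p_y), then the absolute price impact satisfies C = p_x·(x(q) − x(q')) + p_y·(y(q) − y(q')) ≤ 0, i.e., the liquidity provider experiences a gain. -/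
lemma clmm_key (px py s s' : ℝ) (hs : 0 < s) (hs' : 0 < s')
    (h : (s' ≤ s ∧ py * (s * s') ≤ px) ∨ (s ≤ s' ∧ px ≤ py * (s * s'))) :
    px * (1 / s - 1 / s') + py * (s - s') ≤ 0 := by
  have e : px * (1 / s - 1 / s') + py * (s - s')
      = (s - s') * (py * (s * s') - px) / (s * s') := by
    field_simp; ring
  rw [e]
  apply div_nonpos_of_nonpos_of_nonneg _ (by positivity)
  rcases h with ⟨h1, h2⟩ | ⟨h1, h2⟩
  · exact mul_nonpos_of_nonneg_of_nonpos (by linarith) (by linarith)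
  · exact mul_nonpos_of_nonpos_of_nonneg (by linarith) (by linarith)

/-- Gain under diverging prices: if the trade moves the pool price away from the
external market price `px / py`, the liquidity provider experiences a gain. -/
theorem gain_under_diverging_prices
    (L a b px py q q' : ℝ)
    (hL : 0 < L) (ha : 0 < a) (hab : a < b)
    (hpx : 0 < px) (hpy : 0 < py)
    (hq : 0 < q) (hq' : 0 < q')
    (hdiv : (q' < q ∧ q ≤ px / py) ∨ (q' > q ∧ q ≥ px / py)) :
    px * (clmmX L a b q - clmmX L a b q') + py * (clmmY L a b q - clmmY L a b q') ≤ 0 := by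
  set u := min b (max a q) with hu_def
  set u' := min b (max a q') with hu'_def
  have hb : 0 < b := ha.trans hab
  have hu : 0 < u := lt_min hb (lt_of_lt_of_le ha (le_max_left _ _))
  have hu' : 0 < u' := lt_min hb (lt_of_lt_of_le ha (le_max_left _ _))
  set s := Real.sqrt u with hs_def
  set s' := Real.sqrt u' with hs'_def
  have hs : 0 < s := Real.sqrt_pos.mpr hu
  have hs' : 0 < s' := Real.sqrt_pos.mpr hu'
  have hsq : s * s = u := Real.mul_self_sqrt hu.le
  have hsq' : s' * s' = u' := Real.mul_self_sqrt hu'.le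
  have hgoal : px * (clmmX L a b q - clmmX L a b q')
      + py * (clmmY L a b q - clmmY L a b q')
      = L * (px * (1 / s - 1 / s') + py * (s - s')) := by
    simp only [clmmX, clmmY, ← hu_def, ← hu'_def, ← hs_def, ← hs'_def]
    ring
  rw [hgoal]
  have hzero : s = s' → L * (px * (1 / s - 1 / s') + py * (s - s')) ≤ 0 := by
    intro h; rw [h]; simp
  rcases hdiv with ⟨h1, h2⟩ | ⟨h1, h2⟩
  · -- q' < q ≤ px/py
    by_cases haq : a ≤ q
    · -- u = min b q ≤ q
      have hule : u ≤ q := by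
        rw [hu_def, max_eq_right haq]; exact min_le_right _ _
      have hmono : u' ≤ u :=
        min_le_min le_rfl (max_le_max le_rfl h1.le)
      have hss' : s' ≤ s := Real.sqrt_le_sqrt hmono
      have hup : u ≤ px / py := hule.trans h2
      have h2' : py * (s * s') ≤ px := by
        have : s * s' ≤ s * s := by nlinarith
        have : s * s' ≤ px / py := by rw [hsq] at this; linarith
        calc py * (s * s') ≤ py * (px / py) :=
            mul_le_mul_of_nonneg_left this hpy.le
          _ = px := by field_simp
      exact mul_nonpos_of_nonneg_of_nonpos hL.le
        (clmm_key px py s s' hs hs' (Or.inl ⟨hss', h2'⟩))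
    · -- q < a, so u = u' = a
      push_neg at haq
      have e1 : u = a := by
        rw [hu_def, max_eq_left haq.le, min_eq_right hab.le]
      have e2 : u' = a := by
        rw [hu'_def, max_eq_left (le_of_lt (h1.trans haq)), min_eq_right hab.le]
      exact hzero (by rw [hs_def, hs'_def, e1, e2])
  · -- q' > q ≥ px/py
    by_cases hqb : q ≤ b
    · have huge : q ≤ u := by
        rw [hu_def]
        exact le_min hqb (le_max_right _ _)
      have hmono : u ≤ u' :=
        min_le_min le_rfl (max_le_max le_rfl h1.le)
      have hss' : s ≤ s' := Real.sqrt_le_sqrt hmono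
      have hup : px / py ≤ u := le_trans h2 huge
      have h2' : px ≤ py * (s * s') := by
        have h3 : s * s ≤ s * s' := by nlinarith
        have h4 : px / py ≤ s * s' := by linarith [hsq]
        calc px = py * (px / py) := by field_simp
          _ ≤ py * (s * s') := mul_le_mul_of_nonneg_left h4 hpy.le
      exact mul_nonpos_of_nonneg_of_nonpos hL.le
        (clmm_key px py s s' hs hs' (Or.inr ⟨hss', h2'⟩))
    · push_neg at hqb
      have e1 : u = b := by
        rw [hu_def, min_eq_left (le_max_of_le_right hqb.le)]
      have e2 : u' = b := by
        rw [hu'_def, min_eq_left (le_max_of_le_right (hqb.trans h1).le)]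
      exact hzero (by rw [hs_def, hs'_def, e1, e2])
end

section
/- Loss under converging prices: Let (L, a, b) be a liquidity position with L > 0 and 0 < a < b, let p_x, p_y > 0 be market prices, and let q, q' > 0 be pool prices. If either q < q' < p_x/p_y or q > q' > p_x/p_y (i.e., the trade moves the pool price towards the external market price p_x/p_y without crossing it), then the absolute price impact satisfies C = p_x·(x(q) − x(q')) + p_y·(y(q) − y(q')) ≥ 0, i.e., the liquidity provider experiences a loss. -/
/-- Loss under converging prices: if the trade moves the pool price towards the
external market price `px / py` without crossing it, the liquidity provider
experiences a loss. -/
theorem loss_under_converging_prices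
    (L a b px py q q' : ℝ)
    (hL : 0 < L) (ha : 0 < a) (hab : a < b)
    (hpx : 0 < px) (hpy : 0 < py)
    (hq : 0 < q) (hq' : 0 < q')
    (hconv : (q < q' ∧ q' < px / py) ∨ (q > q' ∧ q' > px / py)) :
    px * (clmmX L a b q - clmmX L a b q') + py * (clmmY L a b q - clmmY L a b q') ≥ 0 := by
  set qh := min b (max a q) with hqh
  set qh' := min b (max a q') with hqh'
  have hb : 0 < b := ha.trans hab
  have hqha : a ≤ qh := le_min hab.le (le_max_left _ _)
  have hqha' : a ≤ qh' := le_min hab.le (le_max_left _ _)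
  have hqhb : qh ≤ b := min_le_left _ _
  have hqhb' : qh' ≤ b := min_le_left _ _
  set u := Real.sqrt qh with hu_def
  set v := Real.sqrt qh' with hv_def
  have hu : 0 < u := Real.sqrt_pos.2 (ha.trans_le hqha)
  have hv : 0 < v := Real.sqrt_pos.2 (ha.trans_le hqha')
  have hsb : 0 < Real.sqrt b := Real.sqrt_pos.2 hb
  have hC : px * (clmmX L a b q - clmmX L a b q') + py * (clmmY L a b q - clmmY L a b q')
      = L * ((u - v) * (py * (u * v) - px)) / (u * v) := by
    simp only [clmmX, clmmY, ← hqh, ← hqh', ← hu_def, ← hv_def]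
    field_simp
    ring
  rw [hC]
  have hv2 : v ^ 2 = qh' := Real.sq_sqrt (ha.le.trans hqha')
  have key : 0 ≤ (u - v) * (py * (u * v) - px) := by
    rcases hconv with ⟨h1, h2⟩ | ⟨h1, h2⟩
    · have huv : u ≤ v := Real.sqrt_le_sqrt (min_le_min le_rfl (max_le_max le_rfl h1.le))
      rcases eq_or_lt_of_le huv with h | h
      · simp [h]
      · have hqq : qh < qh' := by
          by_contra h'
          push_neg at h'
          exact absurd (Real.sqrt_le_sqrt h') (not_le.2 h)
        have haq' : a < qh' := lt_of_le_of_lt hqha hqq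
        have hmax : a < max a q' := lt_of_lt_of_le haq' (min_le_right _ _)
        have hq'a : qh' ≤ q' := by
          have : a < q' := ((lt_max_iff).1 hmax).resolve_left (lt_irrefl a)
          calc qh' ≤ max a q' := min_le_right _ _
            _ = q' := max_eq_right this.le
        have h3 : py * (u * v) ≤ px := by
          have h4 : u * v ≤ v ^ 2 := by nlinarith
          have h5 : py * q' < px := by
            rw [lt_div_iff₀ hpy] at h2; linarith [h2]
          nlinarith
        nlinarith [huv, h3]
    · have huv : v ≤ u := Real.sqrt_le_sqrt (min_le_min le_rfl (max_le_max le_rfl h1.le))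
      rcases eq_or_lt_of_le huv with h | h
      · simp [h]
      · have hqq : qh' < qh := by
          by_contra h'
          push_neg at h'
          exact absurd (Real.sqrt_le_sqrt h') (not_le.2 h)
        have hq'b : qh' < b := lt_of_lt_of_le hqq hqhb
        have hmaxb : max a q' < b := by
          by_contra h'
          push_neg at h'
          exact absurd (min_eq_left h' ▸ hq'b) (lt_irrefl b)
        have hq'le : q' ≤ qh' := by
          rw [hqh', min_eq_right hmaxb.le]
          exact le_max_right _ _
        have h3 : px ≤ py * (u * v) := by
          have h4 : v ^ 2 ≤ u * v := by nlinarith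
          have h5 : px < py * q' := by
            rw [gt_iff_lt, div_lt_iff₀ hpy] at h2; linarith
          have h6 : py * q' ≤ py * qh' := mul_le_mul_of_nonneg_left hq'le hpy.le
          have h7 : py * v ^ 2 ≤ py * (u * v) := mul_le_mul_of_nonneg_left h4 hpy.le
          rw [hv2] at h7
          linarith
        exact mul_nonneg (sub_nonneg.2 huv) (sub_nonneg.2 h3)
  exact div_nonneg (mul_nonneg hL.le key) (mul_nonneg hu.le hv.le)
end

section
/- No-loss when pool price is initially aligned with the market price: Let (L, a, b) be a liquidity position with L > 0 and 0 < a < b, let p_x, p_y > 0 be market prices, and let q, q' > 0 be pool prices. If q = p_x/p_y, then for every post-trade pool price q' > 0 the absolute price impact satisfies C = p_x·(x(q) − x(q')) + p_y·(y(q) − y(q')) ≤ 0. -/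
/-- No-loss when the pool price is initially aligned with the market price. -/
theorem no_loss_when_aligned
    (L a b px py q : ℝ)
    (hL : 0 < L) (ha : 0 < a) (hab : a < b)
    (hpx : 0 < px) (hpy : 0 < py)
    (hq : 0 < q) (halign : q = px / py) :
    ∀ q' : ℝ, 0 < q' →
      px * (clmmX L a b q - clmmX L a b q') + py * (clmmY L a b q - clmmY L a b q') ≤ 0 := by
  intro q' hq'
  have hb : 0 < b := ha.trans hab
  have hpx' : px = q * py := by rw [halign]; field_simp
  set m := min b (max a q) with hm
  set m' := min b (max a q') with hm'
  have hma : a ≤ m := le_min hab.le (le_max_left a q)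
  have hmb : m ≤ b := min_le_left _ _
  have hma' : a ≤ m' := le_min hab.le (le_max_left a q')
  have hmb' : m' ≤ b := min_le_left _ _
  set s := Real.sqrt m with hsdef
  set t := Real.sqrt m' with htdef
  have hs : 0 < s := Real.sqrt_pos.2 (ha.trans_le hma)
  have ht : 0 < t := Real.sqrt_pos.2 (ha.trans_le hma')
  have hsb : 0 < Real.sqrt b := Real.sqrt_pos.2 hb
  have key : 0 ≤ (t - s) * (s * t - q) := by
    rcases le_total q a with h1 | h1
    · have hmeq : m = a := by rw [hm, max_eq_left h1, min_eq_right hab.le]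
      have hs2 : s * s = a := by rw [hsdef, hmeq, Real.mul_self_sqrt ha.le]
      have hts : s ≤ t := Real.sqrt_le_sqrt (hmeq ▸ hma')
      have h3 : 0 ≤ t - s := sub_nonneg.2 hts
      have h4 : 0 ≤ s * t - q := by nlinarith [mul_nonneg h3 hs.le]
      exact mul_nonneg h3 h4
    · rcases le_total q b with h2 | h2
      · have hmeq : m = q := by rw [hm, max_eq_right h1, min_eq_right h2]
        have hs2 : s * s = q := by rw [hsdef, hmeq, Real.mul_self_sqrt hq.le]
        nlinarith [sq_nonneg (t - s)]
      · have hmeq : m = b := by rw [hm, min_eq_left (le_max_of_le_right h2)]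
        have hs2 : s * s = b := by rw [hsdef, hmeq, Real.mul_self_sqrt hb.le]
        have hts : t ≤ s := Real.sqrt_le_sqrt (hmeq ▸ hmb')
        have h3 : t - s ≤ 0 := sub_nonpos.2 hts
        have h4 : s * t - q ≤ 0 := by nlinarith [mul_nonpos_of_nonneg_of_nonpos hs.le h3]
        nlinarith [mul_nonneg (neg_nonneg.2 h3) (neg_nonneg.2 h4)]
  have hC : px * (clmmX L a b q - clmmX L a b q') +
      py * (clmmY L a b q - clmmY L a b q')
      = L * py * ((t - s) * (q - s * t)) / (s * t) := by
    simp only [clmmX, clmmY, ← hm, ← hm', ← hsdef, ← htdef, hpx']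
    field_simp
    ring
  rw [hC]
  apply div_nonpos_of_nonpos_of_nonneg _ (mul_pos hs ht).le
  have : (t - s) * (q - s * t) ≤ 0 := by nlinarith
  nlinarith [mul_pos hL hpy]
end
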